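/- Let p, q, r : ℝ⁴ → ℝ be smooth functions of (w, z, x, y), and define m := p_z − q_w + p q_x − q p_x + q q_y − r p_y and n := q_z − r_w + q r_y − r q_y + p r_x − q q_x. Consider ℝ⁵ with coordinates (w, z, x, y, λ) and the vector fields X₁ = ∂_w − p∂_x − q∂_y + λ∂_y + (m − λ(p_x + q_y))∂_λ and X₂ = ∂_z − q∂_x − r∂_y − λ∂_x + (n − λ(q_x + r_y))∂_λ. Then X₁ and X₂ commute identically on ℝ⁵ if and only if (p, q, r) satisfies the system (SD): p_{xx} + 2q_{xy} + r_{yy} = 0, m_x + n_y = 0, and m_z − q m_x − r m_y + (q_x + r_y) m = n_w − p n_x − q n_y + (p_x + q_y) n. -/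

import Mathlib

/-! Both Lax fields have the form `(x, λ) ↦ A(x) + λ B(x)`, so their bracket is computed by the chain
rule from the partial derivatives of `p, q, r` up to order two. Its `∂_w` and `∂_z` components vanish
trivially and its `∂_x` and `∂_y` components vanish because of the way `m` and `n` are chosen. Its
`∂_λ` component is `-E₁ λ² + 2 E₂ λ + E₃`, where `E₁ = 0`, `E₂ = 0`, `E₃ = 0` are the three
equations of (SD); the coefficient of `λ` takes this form only after the mixed second derivatives are
identified (`pd_mSD_add_pd_nSD`). A quadratic polynomial in `λ` vanishes identically iff its
coefficients do. -/

noncomputable section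

/-- Partial derivative of `f` along the `i`-th coordinate direction on `ℝⁿ`.
Coordinates on `ℝ⁴` are `(w, z, x, y) = (0, 1, 2, 3)`; on `ℝ⁵` they are
`(w, z, x, y, λ) = (0, 1, 2, 3, 4)`. -/
def pd {n : ℕ} (i : Fin n) (f : (Fin n → ℝ) → ℝ) : (Fin n → ℝ) → ℝ :=
  fun x => fderiv ℝ f x (Pi.single i 1)

/-- Lie bracket of vector fields on `ℝⁿ`:
`[X,Y](p) = (DY)(p)(X(p)) − (DX)(p)(Y(p))`. -/
def lieBr {n : ℕ} (X Y : (Fin n → ℝ) → (Fin n → ℝ)) :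
    (Fin n → ℝ) → (Fin n → ℝ) :=
  fun p => fderiv ℝ Y p (X p) - fderiv ℝ X p (Y p)

/-- Projection `(w, z, x, y, λ) ↦ (w, z, x, y)`. -/
def π4 (s : Fin 5 → ℝ) : Fin 4 → ℝ := ![s 0, s 1, s 2, s 3]

/-- `m = p_z − q_w + p q_x − q p_x + q q_y − r p_y`. -/
def mSD (p q r : (Fin 4 → ℝ) → ℝ) : (Fin 4 → ℝ) → ℝ :=
  fun x =>
    pd 1 p x - pd 0 q x + p x * pd 2 q x - q x * pd 2 p x
      + q x * pd 3 q x - r x * pd 3 p x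

/-- `n = q_z − r_w + q r_y − r q_y + p r_x − q q_x`. -/
def nSD (p q r : (Fin 4 → ℝ) → ℝ) : (Fin 4 → ℝ) → ℝ :=
  fun x =>
    pd 1 q x - pd 0 r x + q x * pd 3 r x - r x * pd 3 q x
      + p x * pd 2 r x - q x * pd 2 q x

/-- First equation of system (SD): `p_{xx} + 2q_{xy} + r_{yy} = 0`. -/
def SDeq1 (p q r : (Fin 4 → ℝ) → ℝ) : Prop :=
  ∀ x : Fin 4 → ℝ, pd 2 (pd 2 p) x + 2 * pd 2 (pd 3 q) x + pd 3 (pd 3 r) x = 0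

/-- Second equation of system (SD): `m_x + n_y = 0`. -/
def SDeq2 (p q r : (Fin 4 → ℝ) → ℝ) : Prop :=
  ∀ x : Fin 4 → ℝ, pd 2 (mSD p q r) x + pd 3 (nSD p q r) x = 0

/-- Third equation of system (SD):
`m_z − q m_x − r m_y + (q_x + r_y)m = n_w − p n_x − q n_y + (p_x + q_y)n`. -/
def SDeq3 (p q r : (Fin 4 → ℝ) → ℝ) : Prop :=
  ∀ x : Fin 4 → ℝ,
    pd 1 (mSD p q r) x - q x * pd 2 (mSD p q r) x - r x * pd 3 (mSD p q r) x
        + (pd 2 q x + pd 3 r x) * mSD p q r x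
      = pd 0 (nSD p q r) x - p x * pd 2 (nSD p q r) x - q x * pd 3 (nSD p q r) x
        + (pd 2 p x + pd 3 q x) * nSD p q r x

/-- `X₁ = ∂_w − p∂_x − q∂_y + λ∂_y + (m − λ(p_x + q_y))∂_λ`. -/
def sdLax1 (p q r : (Fin 4 → ℝ) → ℝ) : (Fin 5 → ℝ) → (Fin 5 → ℝ) :=
  fun s =>
    ![1, 0, -(p (π4 s)), -(q (π4 s)) + s 4,
      mSD p q r (π4 s) - s 4 * (pd 2 p (π4 s) + pd 3 q (π4 s))]

/-- `X₂ = ∂_z − q∂_x − r∂_y − λ∂_x + (n − λ(q_x + r_y))∂_λ`. -/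
def sdLax2 (p q r : (Fin 4 → ℝ) → ℝ) : (Fin 5 → ℝ) → (Fin 5 → ℝ) :=
  fun s =>
    ![0, 1, -(q (π4 s)) - s 4, -(r (π4 s)),
      nSD p q r (π4 s) - s 4 * (pd 2 q (π4 s) + pd 3 r (π4 s))]

section PartialDerivatives

variable {n : ℕ} {f g : (Fin n → ℝ) → ℝ} {x : Fin n → ℝ}

lemma fderiv_apply_eq_sum_pd (v : Fin n → ℝ) :
    fderiv ℝ f x v = ∑ i, v i * pd i f x := by
  conv_lhs => rw [pi_eq_sum_univ' v]
  simp [pd, map_sum]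

lemma pd_const (i : Fin n) (c : ℝ) : pd i (fun _ => c) x = 0 := by
  simp [pd]

lemma pd_neg (i : Fin n) : pd i (-f) x = -pd i f x := by
  simp [pd, fderiv_neg]

lemma pd_add (i : Fin n) (hf : DifferentiableAt ℝ f x) (hg : DifferentiableAt ℝ g x) :
    pd i (f + g) x = pd i f x + pd i g x := by
  simp [pd, fderiv_add hf hg]

lemma pd_sub (i : Fin n) (hf : DifferentiableAt ℝ f x) (hg : DifferentiableAt ℝ g x) :
    pd i (f - g) x = pd i f x - pd i g x := by
  simp [pd, fderiv_sub hf hg]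

lemma pd_mul (i : Fin n) (hf : DifferentiableAt ℝ f x) (hg : DifferentiableAt ℝ g x) :
    pd i (f * g) x = pd i f x * g x + f x * pd i g x := by
  simp only [pd, fderiv_mul hf hg, add_apply, smul_apply, smul_eq_mul]
  ring

lemma contDiff_pd {k m : WithTop ℕ∞} (hf : ContDiff ℝ k f) (hmk : m + 1 ≤ k) (i : Fin n) :
    ContDiff ℝ m (pd i f) :=
  (ContinuousLinearMap.apply ℝ ℝ (Pi.single i (1 : ℝ)) :
      ((Fin n → ℝ) →L[ℝ] ℝ) →L[ℝ] ℝ).contDiff.comp (hf.fderiv_right hmk)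

lemma differentiable_pd (hf : ContDiff ℝ 2 f) (i : Fin n) : Differentiable ℝ (pd i f) :=
  (contDiff_pd hf (m := 1) (by norm_num) i).differentiable one_ne_zero

lemma pd_pd_comm (hf : ContDiff ℝ 2 f) (i j : Fin n) :
    pd i (pd j f) x = pd j (pd i f) x := by
  have hsymm : IsSymmSndFDerivAt ℝ f x :=
    hf.contDiffAt.isSymmSndFDerivAt (by simp [minSmoothness_of_isRCLikeNormedField])
  have hdiff : DifferentiableAt ℝ (fderiv ℝ f) x :=
    (hf.fderiv_right (m := 1) le_rfl).differentiable one_ne_zero x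
  have hsecond (k l : Fin n) :
      pd k (pd l f) x = fderiv ℝ (fderiv ℝ f) x (Pi.single k 1) (Pi.single l 1) := by
    show fderiv ℝ (fun y => fderiv ℝ f y (Pi.single l 1)) x (Pi.single k 1) = _
    rw [fderiv_clm_apply hdiff (differentiableAt_const _)]
    simp
  rw [hsecond, hsecond, hsymm.eq]

end PartialDerivatives

lemma lieBr_apply {n : ℕ} {X Y : (Fin n → ℝ) → Fin n → ℝ} {s : Fin n → ℝ}
    (hX : DifferentiableAt ℝ X s) (hY : DifferentiableAt ℝ Y s) (i : Fin n) :
    lieBr X Y s i = fderiv ℝ (fun t => Y t i) s (X s) - fderiv ℝ (fun t => X t i) s (Y s) := by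
  simp [lieBr, fderiv_apply hX, fderiv_apply hY]

section AffineLift

variable {n : ℕ} {f g : (Fin n → ℝ) → ℝ} {t : Fin (n + 1) → ℝ}

def affineLift (f g : (Fin n → ℝ) → ℝ) (t : Fin (n + 1) → ℝ) : ℝ :=
  f (Fin.init t) + t (Fin.last n) * g (Fin.init t)

def initCLM : (Fin (n + 1) → ℝ) →L[ℝ] (Fin n → ℝ) :=
  ContinuousLinearMap.pi fun i => ContinuousLinearMap.proj i.castSucc

@[simp]
lemma initCLM_apply (v : Fin (n + 1) → ℝ) : initCLM v = Fin.init v := rfl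

lemma hasFDerivAt_affineLift (hf : DifferentiableAt ℝ f (Fin.init t))
    (hg : DifferentiableAt ℝ g (Fin.init t)) :
    HasFDerivAt (affineLift f g) (fderiv ℝ f (Fin.init t) ∘L initCLM +
      (t (Fin.last n) • fderiv ℝ g (Fin.init t) ∘L initCLM +
        g (Fin.init t) • ContinuousLinearMap.proj (Fin.last n))) t :=
  (hf.hasFDerivAt.comp t initCLM.hasFDerivAt).add
    ((hasFDerivAt_apply (Fin.last n) t).mul (hg.hasFDerivAt.comp t initCLM.hasFDerivAt))

lemma differentiableAt_affineLift (hf : DifferentiableAt ℝ f (Fin.init t))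
    (hg : DifferentiableAt ℝ g (Fin.init t)) : DifferentiableAt ℝ (affineLift f g) t :=
  (hasFDerivAt_affineLift hf hg).differentiableAt

lemma fderiv_affineLift_apply (hf : DifferentiableAt ℝ f (Fin.init t))
    (hg : DifferentiableAt ℝ g (Fin.init t)) (v : Fin (n + 1) → ℝ) :
    fderiv ℝ (affineLift f g) t v = fderiv ℝ f (Fin.init t) (Fin.init v) +
      t (Fin.last n) * fderiv ℝ g (Fin.init t) (Fin.init v) + v (Fin.last n) * g (Fin.init t) := by
  rw [(hasFDerivAt_affineLift hf hg).fderiv]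
  simp only [add_apply, ContinuousLinearMap.comp_apply, initCLM_apply,
    smul_apply, ContinuousLinearMap.proj_apply, smul_eq_mul]
  ring

end AffineLift

lemma forall_quadratic_eq_zero_iff {a b c : ℝ} :
    (∀ t : ℝ, a * t ^ 2 + b * t + c = 0) ↔ a = 0 ∧ b = 0 ∧ c = 0 := by
  refine ⟨fun h => ?_, fun ⟨ha, hb, hc⟩ t => by simp [ha, hb, hc]⟩
  have h₀ := h 0
  have h₁ := h 1
  have h₂ := h (-1)
  norm_num at h₀ h₁ h₂
  exact ⟨by linarith, by linarith, h₀⟩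

lemma π4_eq_init : π4 = Fin.init := by
  funext s i
  fin_cases i <;> rfl

section SDLax

variable {p q r : (Fin 4 → ℝ) → ℝ}

lemma mSD_eq : mSD p q r = pd 1 p - pd 0 q + p * pd 2 q - q * pd 2 p + q * pd 3 q - r * pd 3 p :=
  rfl

lemma nSD_eq : nSD p q r = pd 1 q - pd 0 r + q * pd 3 r - r * pd 3 q + p * pd 2 r - q * pd 2 q :=
  rfl

lemma differentiable_mSD (hp : ContDiff ℝ 2 p) (hq : ContDiff ℝ 2 q) (hr : ContDiff ℝ 2 r) :
    Differentiable ℝ (mSD p q r) := by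
  have := differentiable_pd hp
  have := differentiable_pd hq
  have := hp.differentiable two_ne_zero
  have := hq.differentiable two_ne_zero
  have := hr.differentiable two_ne_zero
  rw [mSD_eq]
  fun_prop

lemma differentiable_nSD (hp : ContDiff ℝ 2 p) (hq : ContDiff ℝ 2 q) (hr : ContDiff ℝ 2 r) :
    Differentiable ℝ (nSD p q r) := by
  have := differentiable_pd hq
  have := differentiable_pd hr
  have := hp.differentiable two_ne_zero
  have := hq.differentiable two_ne_zero
  have := hr.differentiable two_ne_zero
  rw [nSD_eq]
  fun_prop

lemma sdLax1_eq_affineLift (i : Fin 5) :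
    (fun s => sdLax1 p q r s i) = affineLift (![fun _ => 1, fun _ => 0, -p, -q, mSD p q r] i)
      (![fun _ => 0, fun _ => 0, fun _ => 0, fun _ => 1, -(pd 2 p + pd 3 q)] i) := by
  funext s
  fin_cases i <;>
    simp only [sdLax1, affineLift, π4_eq_init, Fin.zero_eta, Fin.mk_one, Fin.reduceFinMk,
      Fin.last, Matrix.cons_val, Pi.neg_apply, Pi.add_apply] <;> ring

lemma sdLax2_eq_affineLift (i : Fin 5) :
    (fun s => sdLax2 p q r s i) = affineLift (![fun _ => 0, fun _ => 1, -q, -r, nSD p q r] i)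
      (![fun _ => 0, fun _ => 0, fun _ => -1, fun _ => 0, -(pd 2 q + pd 3 r)] i) := by
  funext s
  fin_cases i <;>
    simp only [sdLax2, affineLift, π4_eq_init, Fin.zero_eta, Fin.mk_one, Fin.reduceFinMk,
      Fin.last, Matrix.cons_val, Pi.neg_apply, Pi.add_apply] <;> ring

lemma differentiable_sdLax1 (hp : ContDiff ℝ 2 p) (hq : ContDiff ℝ 2 q) (hr : ContDiff ℝ 2 r) :
    Differentiable ℝ (sdLax1 p q r) := by
  have := differentiable_pd hp
  have := differentiable_pd hq
  have := hp.differentiable two_ne_zero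
  have := hq.differentiable two_ne_zero
  have := differentiable_mSD hp hq hr
  refine fun s => differentiableAt_pi.2 fun i => ?_
  rw [sdLax1_eq_affineLift]
  fin_cases i <;> simp only [Fin.zero_eta, Fin.mk_one, Fin.reduceFinMk, Matrix.cons_val] <;>
    exact differentiableAt_affineLift (by fun_prop) (by fun_prop)

lemma differentiable_sdLax2 (hp : ContDiff ℝ 2 p) (hq : ContDiff ℝ 2 q) (hr : ContDiff ℝ 2 r) :
    Differentiable ℝ (sdLax2 p q r) := by
  have := differentiable_pd hq
  have := differentiable_pd hr
  have := hq.differentiable two_ne_zero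
  have := hr.differentiable two_ne_zero
  have := differentiable_nSD hp hq hr
  refine fun s => differentiableAt_pi.2 fun i => ?_
  rw [sdLax2_eq_affineLift]
  fin_cases i <;> simp only [Fin.zero_eta, Fin.mk_one, Fin.reduceFinMk, Matrix.cons_val] <;>
    exact differentiableAt_affineLift (by fun_prop) (by fun_prop)

lemma fderiv_affineLift_sdLax1 {f g : (Fin 4 → ℝ) → ℝ} {s : Fin 5 → ℝ}
    (hf : DifferentiableAt ℝ f (π4 s)) (hg : DifferentiableAt ℝ g (π4 s)) :
    fderiv ℝ (affineLift f g) s (sdLax1 p q r s) =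
      pd 0 f (π4 s) - p (π4 s) * pd 2 f (π4 s) + (s 4 - q (π4 s)) * pd 3 f (π4 s)
      + s 4 * (pd 0 g (π4 s) - p (π4 s) * pd 2 g (π4 s) + (s 4 - q (π4 s)) * pd 3 g (π4 s))
      + (mSD p q r (π4 s) - s 4 * (pd 2 p (π4 s) + pd 3 q (π4 s))) * g (π4 s) := by
  rw [π4_eq_init] at *
  rw [fderiv_affineLift_apply hf hg, fderiv_apply_eq_sum_pd, fderiv_apply_eq_sum_pd,
    Fin.sum_univ_four, Fin.sum_univ_four]
  simp only [sdLax1, π4_eq_init, Fin.init, Fin.castSucc_zero, Fin.castSucc_one, Fin.reduceCastSucc,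
    Fin.reduceLast, Matrix.cons_val]
  ring

lemma fderiv_affineLift_sdLax2 {f g : (Fin 4 → ℝ) → ℝ} {s : Fin 5 → ℝ}
    (hf : DifferentiableAt ℝ f (π4 s)) (hg : DifferentiableAt ℝ g (π4 s)) :
    fderiv ℝ (affineLift f g) s (sdLax2 p q r s) =
      pd 1 f (π4 s) - (q (π4 s) + s 4) * pd 2 f (π4 s) - r (π4 s) * pd 3 f (π4 s)
      + s 4 * (pd 1 g (π4 s) - (q (π4 s) + s 4) * pd 2 g (π4 s) - r (π4 s) * pd 3 g (π4 s))
      + (nSD p q r (π4 s) - s 4 * (pd 2 q (π4 s) + pd 3 r (π4 s))) * g (π4 s) := by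
  rw [π4_eq_init] at *
  rw [fderiv_affineLift_apply hf hg, fderiv_apply_eq_sum_pd, fderiv_apply_eq_sum_pd,
    Fin.sum_univ_four, Fin.sum_univ_four]
  simp only [sdLax2, π4_eq_init, Fin.init, Fin.castSucc_zero, Fin.castSucc_one, Fin.reduceCastSucc,
    Fin.reduceLast, Matrix.cons_val]
  ring

def sdRes1 (p q r : (Fin 4 → ℝ) → ℝ) (x : Fin 4 → ℝ) : ℝ :=
  pd 2 (pd 2 p) x + 2 * pd 2 (pd 3 q) x + pd 3 (pd 3 r) x

def sdRes2 (p q r : (Fin 4 → ℝ) → ℝ) (x : Fin 4 → ℝ) : ℝ :=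
  pd 2 (mSD p q r) x + pd 3 (nSD p q r) x

def sdRes3 (p q r : (Fin 4 → ℝ) → ℝ) (x : Fin 4 → ℝ) : ℝ :=
  (pd 0 (nSD p q r) x - p x * pd 2 (nSD p q r) x - q x * pd 3 (nSD p q r) x
      + (pd 2 p x + pd 3 q x) * nSD p q r x)
    - (pd 1 (mSD p q r) x - q x * pd 2 (mSD p q r) x - r x * pd 3 (mSD p q r) x
      + (pd 2 q x + pd 3 r x) * mSD p q r x)

/-- With `a = p_x + q_y` and `b = q_x + r_y`:
`m_x + n_y = a_z - b_w + p b_x + q b_y - q a_x - r a_y`. -/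
lemma pd_mSD_add_pd_nSD (hp : ContDiff ℝ 2 p) (hq : ContDiff ℝ 2 q) (hr : ContDiff ℝ 2 r)
    (x : Fin 4 → ℝ) : pd 2 (mSD p q r) x + pd 3 (nSD p q r) x =
      pd 1 (pd 2 p) x + pd 1 (pd 3 q) x - pd 0 (pd 2 q) x - pd 0 (pd 3 r) x
      + p x * (pd 2 (pd 2 q) x + pd 2 (pd 3 r) x) + q x * (pd 3 (pd 2 q) x + pd 3 (pd 3 r) x)
      - q x * (pd 2 (pd 2 p) x + pd 2 (pd 3 q) x) - r x * (pd 3 (pd 2 p) x + pd 3 (pd 3 q) x) := by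
  have := differentiable_pd hp
  have := differentiable_pd hq
  have := differentiable_pd hr
  have := hp.differentiable two_ne_zero
  have := hq.differentiable two_ne_zero
  have := hr.differentiable two_ne_zero
  rw [mSD_eq, nSD_eq]
  simp (disch := fun_prop) only [pd_add, pd_sub, pd_mul]
  rw [pd_pd_comm hp 2 1, pd_pd_comm hq 2 0, pd_pd_comm hq 3 1, pd_pd_comm hr 3 0,
    pd_pd_comm hp 2 3, pd_pd_comm hr 3 2, pd_pd_comm hq 3 2]
  ring

theorem lieBr_sdLax (hp : ContDiff ℝ 2 p) (hq : ContDiff ℝ 2 q) (hr : ContDiff ℝ 2 r)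
    (s : Fin 5 → ℝ) : lieBr (sdLax1 p q r) (sdLax2 p q r) s = Pi.single 4
      (-sdRes1 p q r (π4 s) * s 4 ^ 2 + 2 * sdRes2 p q r (π4 s) * s 4 + sdRes3 p q r (π4 s)) := by
  have := differentiable_pd hp
  have := differentiable_pd hq
  have := differentiable_pd hr
  have := hp.differentiable two_ne_zero
  have := hq.differentiable two_ne_zero
  have := hr.differentiable two_ne_zero
  have := differentiable_mSD hp hq hr
  have := differentiable_nSD hp hq hr
  ext i
  rw [lieBr_apply (differentiable_sdLax1 hp hq hr s) (differentiable_sdLax2 hp hq hr s),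
    sdLax1_eq_affineLift, sdLax2_eq_affineLift]
  fin_cases i <;> simp only [Fin.zero_eta, Fin.mk_one, Fin.reduceFinMk, Matrix.cons_val] <;>
    rw [fderiv_affineLift_sdLax1 (by fun_prop) (by fun_prop),
      fderiv_affineLift_sdLax2 (by fun_prop) (by fun_prop)] <;>
    simp (disch := fun_prop) only [pd_const, pd_neg, pd_add, Pi.neg_apply, Pi.add_apply]
  · simp
  · simp
  · rw [Pi.single_eq_of_ne (by decide), mSD]
    ring
  · rw [Pi.single_eq_of_ne (by decide), nSD]
    ring
  · have h := pd_mSD_add_pd_nSD hp hq hr (π4 s)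
    rw [Pi.single_eq_same, sdRes1, sdRes2, sdRes3]
    rw [pd_pd_comm hq 3 2] at h ⊢
    linear_combination (-s 4) * h

end SDLax

/-- For smooth `p, q, r`, the Lax fields `X₁, X₂` commute identically on `ℝ⁵`
iff `(p, q, r)` solves system (SD). -/
theorem sd_lax_commute_iff_SD
    (p q r : (Fin 4 → ℝ) → ℝ)
    (hp : ContDiff ℝ (⊤ : ℕ∞) p)
    (hq : ContDiff ℝ (⊤ : ℕ∞) q)
    (hr : ContDiff ℝ (⊤ : ℕ∞) r) :
    (∀ s : Fin 5 → ℝ, lieBr (sdLax1 p q r) (sdLax2 p q r) s = 0) ↔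
      (SDeq1 p q r ∧ SDeq2 p q r ∧ SDeq3 p q r) := by
  have h2 : (2 : WithTop ℕ∞) ≤ (⊤ : ℕ∞) := WithTop.coe_le_coe.2 le_top
  have hbracket := lieBr_sdLax (hp.of_le h2) (hq.of_le h2) (hr.of_le h2)
  have hsplit : (∀ s : Fin 5 → ℝ, lieBr (sdLax1 p q r) (sdLax2 p q r) s = 0) ↔
      ∀ x t, -sdRes1 p q r x * t ^ 2 + 2 * sdRes2 p q r x * t + sdRes3 p q r x = 0 := by
    refine ⟨fun h x t => ?_, fun h s => by rw [hbracket, h, Pi.single_zero]⟩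
    have := h (Fin.snoc x t)
    rwa [hbracket, Pi.single_eq_zero_iff, π4_eq_init, Fin.init_snoc] at this
  simp only [hsplit, forall_quadratic_eq_zero_iff, neg_eq_zero, mul_eq_zero, two_ne_zero,
    false_or, forall_and]
  exact and_congr Iff.rfl (and_congr Iff.rfl (forall_congr' fun x => sub_eq_zero.trans eq_comm))
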